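/- arXiv:1305.3354 — 2 statements merged into one kernel-verified Lean document; each statement's English description precedes it below -/
import Mathlib

section
/- (Rosenthal's exact potential property) In a congestion game, if states s and s' differ only in the strategy of a single player i (i.e. s'_j = s_j for all j ≠ i), then Φ(s) − Φ(s') = c_i(s) − c_i(s'), where Φ is Rosenthal's potential function. -/
/-!
Split the load on each resource into player `i`'s contribution and everyone else's. Since
`Φ(s) = ∑_r ∑_{k ≤ f_s(r)} d_r(k)`, player `i`'s contribution to resource `r ∈ s_i` is exactly the
top term `d_r(f_s(r))` of the inner sum, so `Φ(s) = c_i(s) + Ψ`, where `Ψ` depends only on the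
strategies of the other players. Two states differing only in player `i` share `Ψ`.
-/

open Finset

/-- In a congestion game, the number of players using resource `r` in state `s`. -/
def usage {n : ℕ} {R : Type*} [Fintype R] [DecidableEq R]
    (s : Fin n → Finset R) (r : R) : ℕ :=
  (Finset.univ.filter (fun j : Fin n => r ∈ s j)).card

/-- The cost of player `i` in state `s`: `c_i(s) = ∑_{r ∈ s_i} d_r(f_s(r))`. -/
def cost {n : ℕ} {R : Type*} [Fintype R] [DecidableEq R]
    (d : R → ℕ → ℕ) (i : Fin n) (s : Fin n → Finset R) : ℕ :=
  ∑ r ∈ s i, d r (usage s r)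

/-- Rosenthal's potential function: `Φ(s) = ∑_{r ∈ R} ∑_{k=1}^{f_s(r)} d_r(k)`. -/
def potential {n : ℕ} {R : Type*} [Fintype R] [DecidableEq R]
    (d : R → ℕ → ℕ) (s : Fin n → Finset R) : ℕ :=
  ∑ r : R, ∑ k ∈ Finset.Icc 1 (usage s r), d r k

section

variable {n : ℕ} {R : Type*} [DecidableEq R]

def usageExcept (s : Fin n → Finset R) (i : Fin n) (r : R) : ℕ :=
  ((univ.erase i).filter (fun j => r ∈ s j)).card

theorem usage_eq_usageExcept_add [Fintype R] (s : Fin n → Finset R) (i : Fin n) (r : R) :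
    usage s r = usageExcept s i r + if r ∈ s i then 1 else 0 := by
  rw [usage, usageExcept, card_filter, card_filter, ← sum_erase_add _ _ (mem_univ i)]

theorem usageExcept_congr {s s' : Fin n → Finset R} {i : Fin n}
    (hdiff : ∀ j, j ≠ i → s' j = s j) : usageExcept s' i = usageExcept s i := by
  funext r
  refine congrArg card (filter_congr fun j hj => ?_)
  rw [hdiff j (ne_of_mem_erase hj)]

theorem cost_eq_sum_usageExcept [Fintype R] (d : R → ℕ → ℕ) (i : Fin n) (s : Fin n → Finset R) :
    cost d i s = ∑ r ∈ s i, d r (usageExcept s i r + 1) :=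
  sum_congr rfl fun r hr => by rw [usage_eq_usageExcept_add s i r, if_pos hr]

theorem potential_eq_cost_add [Fintype R] (d : R → ℕ → ℕ) (i : Fin n) (s : Fin n → Finset R) :
    potential d s = cost d i s + ∑ r : R, ∑ k ∈ Icc 1 (usageExcept s i r), d r k := by
  have top_term : ∀ r, ∑ k ∈ Icc 1 (usage s r), d r k =
      (if r ∈ s i then d r (usageExcept s i r + 1) else 0) +
        ∑ k ∈ Icc 1 (usageExcept s i r), d r k := by
    intro r
    rw [usage_eq_usageExcept_add s i r]
    split_ifs
    · rw [sum_Icc_succ_top (by omega), add_comm]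
    · simp
  rw [potential, sum_congr rfl fun r _ => top_term r, sum_add_distrib, ← sum_filter,
    filter_mem_eq_inter, univ_inter, cost_eq_sum_usageExcept]

end

theorem rosenthal_exact_potential_general {n : ℕ} {R : Type*} [Fintype R] [DecidableEq R]
    (d : R → ℕ → ℕ)
    (s s' : Fin n → Finset R)
    (i : Fin n) (hdiff : ∀ j, j ≠ i → s' j = s j) :
    (potential d s : ℤ) - potential d s' = (cost d i s : ℤ) - cost d i s' := by
  rw [potential_eq_cost_add d i s, potential_eq_cost_add d i s', usageExcept_congr hdiff]
  push_cast
  ring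

/-- (Rosenthal's exact potential property) In a congestion game with resources `R`,
strategy sets `Strat i` and nondecreasing delay functions `d r`, if states `s` and
`s'` differ only in the strategy of player `i`, then
`Φ(s) − Φ(s') = c_i(s) − c_i(s')`. -/
theorem rosenthal_exact_potential {n : ℕ} {R : Type*} [Fintype R] [DecidableEq R]
    (Strat : Fin n → Finset (Finset R)) (d : R → ℕ → ℕ) (hd : ∀ r, Monotone (d r))
    (s s' : Fin n → Finset R) (hs : ∀ j, s j ∈ Strat j) (hs' : ∀ j, s' j ∈ Strat j)
    (i : Fin n) (hdiff : ∀ j, j ≠ i → s' j = s j) :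
    (potential d s : ℤ) - potential d s' = (cost d i s : ℤ) - cost d i s' :=
  rosenthal_exact_potential_general d s s' i hdiff
end

section
/- (Rosenthal) Every congestion game possesses a pure Nash equilibrium, i.e. a state s such that for every player i and every alternative strategy s'_i ∈ S_i, c_i(s_1,…,s_i,…,s_n) ≤ c_i(s_1,…,s'_i,…,s_n). -/
/-!
Rosenthal's potential `Φ` is an exact potential: when player `i` switches from `s i` to `t`,
the change of `Φ` equals the change of player `i`'s cost, because on each resource it gains
(or loses) exactly the summand `d_r(k)` for the new (or old) load `k`. A state minimizing `Φ`
over the finite set of strategy profiles therefore admits no improving deviation.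
-/

open Finset

section ExactPotential

variable {ι : Type*} [Fintype ι] [DecidableEq ι] {σ : ι → Type*}
  {M : Type*} [AddCommMonoid M] [LinearOrder M] [IsOrderedCancelAddMonoid M]

theorem exists_forall_le_update_of_isExactPotential (S : ∀ i, Finset (σ i))
    (hS : ∀ i, (S i).Nonempty) (c : ι → (∀ i, σ i) → M) (Φ : (∀ i, σ i) → M)
    (hΦ : ∀ s i t, Φ (Function.update s i t) + c i s = Φ s + c i (Function.update s i t)) :
    ∃ s ∈ Fintype.piFinset S, ∀ i, ∀ t ∈ S i, c i s ≤ c i (Function.update s i t) := by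
  obtain ⟨s, hs, hmin⟩ :=
    (Fintype.piFinset S).exists_min_image Φ (Fintype.piFinset_nonempty.2 hS)
  refine ⟨s, hs, fun i t ht => ?_⟩
  have hupdate : Function.update s i t ∈ Fintype.piFinset S := by
    rw [Fintype.mem_piFinset, Function.forall_update_iff]
    exact ⟨ht, fun j _ => Fintype.mem_piFinset.1 hs j⟩
  refine le_of_add_le_add_left (a := Φ s) ?_
  calc Φ s + c i s ≤ Φ (Function.update s i t) + c i s :=
      add_le_add_left (hmin _ hupdate) _
    _ = Φ s + c i (Function.update s i t) := hΦ s i t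

end ExactPotential

theorem sum_Icc_one_add_ite (f : ℕ → ℕ) (m : ℕ) (p : Prop) [Decidable p] :
    ∑ k ∈ Icc 1 (m + if p then 1 else 0), f k
      = ∑ k ∈ Icc 1 m, f k + if p then f (m + 1) else 0 := by
  split_ifs
  · exact sum_Icc_succ_top (Nat.le_add_left 1 m) f
  · simp

section Congestion

variable {n : ℕ} {R : Type*} [Fintype R] [DecidableEq R]

theorem usage_eq_card_erase_add (s : Fin n → Finset R) (i : Fin n) (r : R) :
    usage s r = #{j ∈ univ.erase i | r ∈ s j} + if r ∈ s i then 1 else 0 := by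
  rw [usage, card_filter, card_filter, ← sum_erase_add _ _ (mem_univ i)]

theorem usage_update (s : Fin n → Finset R) (i : Fin n) (t : Finset R) (r : R) :
    usage (Function.update s i t) r
      = #{j ∈ univ.erase i | r ∈ s j} + if r ∈ t then 1 else 0 := by
  rw [usage_eq_card_erase_add _ i, Function.update_self]
  congr 2
  exact filter_congr fun j hj => by rw [Function.update_of_ne (ne_of_mem_erase hj)]

theorem cost_eq_sum_ite (d : R → ℕ → ℕ) (i : Fin n) (s : Fin n → Finset R) :
    cost d i s = ∑ r, if r ∈ s i then d r (usage s r) else 0 := by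
  rw [cost, sum_ite_mem, univ_inter]

theorem potential_update_add_cost (d : R → ℕ → ℕ) (s : Fin n → Finset R) (i : Fin n)
    (t : Finset R) :
    potential d (Function.update s i t) + cost d i s
      = potential d s + cost d i (Function.update s i t) := by
  simp only [potential, cost_eq_sum_ite, ← sum_add_distrib]
  refine sum_congr rfl fun r _ => ?_
  rw [Function.update_self, usage_update, usage_eq_card_erase_add s i, sum_Icc_one_add_ite,
    sum_Icc_one_add_ite]
  split_ifs <;> ring

end Congestion

theorem congestionGame_exists_pure_nash_general {n : ℕ} {R : Type*} [Fintype R] [DecidableEq R]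
    (Strat : Fin n → Finset (Finset R)) (hne : ∀ i, (Strat i).Nonempty)
    (d : R → ℕ → ℕ) :
    ∃ s : Fin n → Finset R, (∀ i, s i ∈ Strat i) ∧
      ∀ i : Fin n, ∀ t ∈ Strat i, cost d i s ≤ cost d i (Function.update s i t) := by
  obtain ⟨s, hs, hNash⟩ := exists_forall_le_update_of_isExactPotential Strat hne
    (fun i => cost d i) (potential d) (potential_update_add_cost d)
  exact ⟨s, Fintype.mem_piFinset.1 hs, hNash⟩

/-- (Rosenthal) Every congestion game possesses a pure Nash equilibrium: a state
`s` (with `s i` a strategy of player `i`) such that for every player `i` and every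
alternative strategy `t ∈ Strat i`, `c_i(s) ≤ c_i(s_{-i}, t)`. -/
theorem congestionGame_exists_pure_nash {n : ℕ} {R : Type*} [Fintype R] [DecidableEq R]
    (Strat : Fin n → Finset (Finset R)) (hne : ∀ i, (Strat i).Nonempty)
    (d : R → ℕ → ℕ) (hd : ∀ r, Monotone (d r)) :
    ∃ s : Fin n → Finset R, (∀ i, s i ∈ Strat i) ∧
      ∀ i : Fin n, ∀ t ∈ Strat i, cost d i s ≤ cost d i (Function.update s i t) :=
  congestionGame_exists_pure_nash_general Strat hne d
end
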